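/- Let $d \in \{2,3\}$, $\Gamma \subset \mathbb{R}^d$ a lattice, $t \in \mathbb{R}^d$, $\gamma \in \Gamma$, and suppose $|\gamma+t| \neq |\gamma + \gamma_1 + t|$ for all nonzero $\gamma_1 \in \Gamma$. Then $\sum_{\gamma_1 \in \Gamma(k+)} \big(|\gamma+t|^2 - |\gamma+\gamma_1+t|^2\big)^{-2} < \infty$, where $\Gamma(k+)$ is any subset of $\Gamma \setminus \{0\}$ avoiding the zero denominators. -/

import Mathlib

/-!
Since `‖a + x‖² - ‖a‖² = ‖x‖² + 2⟪a, x⟫ ≥ ‖x‖² / 2` as soon as `‖x‖ ≥ 4‖a‖`, and only finitely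
many lattice points violate this, the terms are eventually bounded by `4 ‖x‖⁻⁴`, which is summable
over a lattice of rank `d < 4`.
-/

open Module

theorem norm_sq_div_two_le_norm_add_sq_sub_norm_sq {E : Type*} [NormedAddCommGroup E]
    [InnerProductSpace ℝ E] {a x : E} (hx : 4 * ‖a‖ ≤ ‖x‖) :
    ‖x‖ ^ 2 / 2 ≤ ‖a + x‖ ^ 2 - ‖a‖ ^ 2 := by
  have hinner : -(‖a‖ * ‖x‖) ≤ inner ℝ a x := (abs_le.mp (abs_real_inner_le_norm a x)).1
  rw [norm_add_sq_real]
  nlinarith [norm_nonneg a, norm_nonneg x]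

theorem inv_norm_sq_sub_norm_add_sq_sq_le {E : Type*} [NormedAddCommGroup E]
    [InnerProductSpace ℝ E] {a x : E} (hx : 4 * ‖a‖ < ‖x‖) :
    ((‖a‖ ^ 2 - ‖a + x‖ ^ 2)⁻¹) ^ 2 ≤ 4 * ‖x‖⁻¹ ^ 4 := by
  have hx0 : 0 < ‖x‖ := (mul_nonneg zero_le_four (norm_nonneg a)).trans_lt hx
  have hD := norm_sq_div_two_le_norm_add_sq_sub_norm_sq hx.le
  calc ((‖a‖ ^ 2 - ‖a + x‖ ^ 2)⁻¹) ^ 2 = ((‖a + x‖ ^ 2 - ‖a‖ ^ 2) ^ 2)⁻¹ := by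
        rw [inv_pow, sub_sq_comm]
    _ ≤ ((‖x‖ ^ 2 / 2) ^ 2)⁻¹ := by gcongr
    _ = 4 * ‖x‖⁻¹ ^ 4 := by field_simp; ring

theorem ZLattice.summable_inv_norm_sq_sub_norm_add_sq_sq {E : Type*} [NormedAddCommGroup E]
    [InnerProductSpace ℝ E] [FiniteDimensional ℝ E] (L : Submodule ℤ E) [DiscreteTopology L]
    (hL : finrank ℤ L < 4) (a : E) :
    Summable fun z : L => ((‖a‖ ^ 2 - ‖a + z‖ ^ 2)⁻¹) ^ 2 := by
  have hfar : ∀ᶠ z : L in Filter.cofinite, 4 * ‖a‖ < ‖(z : E)‖ :=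
    (tendsto_norm_cocompact_atTop.comp (L.toAddSubgroup.tendsto_coe_cofinite_of_discrete
      (isDiscrete_iff_discreteTopology.mpr ‹_›))).eventually_gt_atTop _
  refine .of_norm_bounded_eventually ((ZLattice.summable_norm_pow_inv L 4 hL).mul_left 4) ?_
  filter_upwards [hfar] with z hz
  rw [Real.norm_of_nonneg (sq_nonneg _)]
  exact inv_norm_sq_sub_norm_add_sq_sq_le hz

theorem stmt_10_general (d : ℕ) (hd : d = 2 ∨ d = 3)
    (v : Module.Basis (Fin d) ℝ (EuclideanSpace ℝ (Fin d)))
    (t : EuclideanSpace ℝ (Fin d))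
    (γ : EuclideanSpace ℝ (Fin d))
    (S : Set (EuclideanSpace ℝ (Fin d)))
    (hS : S ⊆ {x | (∃ m : Fin d → ℤ, x = ∑ i, (m i : ℝ) • v i) ∧ x ≠ 0}) :
    Summable fun γ1 : S => ((‖γ + t‖ ^ 2 - ‖γ + (γ1 : EuclideanSpace ℝ (Fin d)) + t‖ ^ 2)⁻¹) ^ 2 := by
  let L := Submodule.span ℤ (Set.range v)
  have hrank : finrank ℤ L < 4 := by
    rw [ZLattice.rank ℝ L, finrank_euclideanSpace_fin]
    omega
  have hSL : S ⊆ L := by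
    rintro x hx
    obtain ⟨⟨m, rfl⟩, -⟩ := hS hx
    simp_rw [Int.cast_smul_eq_zsmul]
    exact (Submodule.mem_span_range_iff_exists_fun ℤ).2 ⟨m, rfl⟩
  refine ((ZLattice.summable_inv_norm_sq_sub_norm_add_sq_sq L hrank (γ + t)).comp_injective
    (Set.inclusion_injective hSL)).congr fun x => ?_
  simp only [Function.comp_apply, add_right_comm γ _ t]

/-- Estimate (55): in dimensions 2 and 3 the reciprocals of the denominators
`|γ+t|² - |γ+γ₁+t|²` are square-summable over any subset of the lattice avoiding
zero denominators. -/
theorem stmt_10 (d : ℕ) (hd : d = 2 ∨ d = 3)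
    (v : Module.Basis (Fin d) ℝ (EuclideanSpace ℝ (Fin d)))
    (t : EuclideanSpace ℝ (Fin d))
    (γ : EuclideanSpace ℝ (Fin d))
    (hγ : ∃ m : Fin d → ℤ, γ = ∑ i, (m i : ℝ) • v i)
    (h : ∀ x : EuclideanSpace ℝ (Fin d),
      (∃ m : Fin d → ℤ, x = ∑ i, (m i : ℝ) • v i) → x ≠ 0 → ‖γ + t‖ ≠ ‖γ + x + t‖)
    (S : Set (EuclideanSpace ℝ (Fin d)))
    (hS : S ⊆ {x | (∃ m : Fin d → ℤ, x = ∑ i, (m i : ℝ) • v i) ∧ x ≠ 0}) :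
    Summable fun γ1 : S => ((‖γ + t‖ ^ 2 - ‖γ + (γ1 : EuclideanSpace ℝ (Fin d)) + t‖ ^ 2)⁻¹) ^ 2 :=
  stmt_10_general d hd v t γ S hS
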